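/- Let k be odd and let z be any (k+1)-mer over the DNA alphabet. Then the canonical bi-directed edge produced by the STEP-1 rule from rc(z) is equal, as a bi-directed edge, to the one produced from z: CE(rc(z)) is either CE(z) itself or its bi-directed reversal rev(CE(z)), where rev((u, v, o₁, o₂)) = (v, u, ¬o₂, ¬o₁) and ¬ swaps ▷ and ◁. -/

import Mathlib

/-- The DNA alphabet Σ = {A, C, G, T}. -/
inductive Base : Type
  | A | C | G | T
  deriving DecidableEq

/-- The complement map: c(A)=T, c(T)=A, c(C)=G, c(G)=C. -/
def Base.comp : Base → Base
  | .A => .T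
  | .T => .A
  | .C => .G
  | .G => .C

/-- Reverse complement: the reversal of the character-wise complement. -/
def rc (s : List Base) : List Base := (s.map Base.comp).reverse

def Base.toFin : Base → Fin 4
  | .A => 0
  | .C => 1
  | .G => 2
  | .T => 3

/-- The order A < C < G < T on the DNA alphabet. -/
instance : LinearOrder Base :=
  LinearOrder.lift' Base.toFin (fun a b h => by cases a <;> cases b <;> simp_all [Base.toFin])

/-- Canonical form: the lexicographically smaller of `s` and `rc s`. -/
def canon (s : List Base) : List Base := if s ≤ rc s then s else rc s

/-- Orientations of the arrowheads of a bi-directed edge: `fwd` = ▷, `rev` = ◁. -/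
inductive Orient : Type
  | fwd | rev
  deriving DecidableEq

/-- `¬` on orientations: swaps ▷ and ◁. -/
def Orient.neg : Orient → Orient
  | .fwd => .rev
  | .rev => .fwd

/-- A bi-directed edge `(v₁, v₂, o₁, o₂)`. -/
abbrev BEdge : Type := List Base × List Base × Orient × Orient

/-- The STEP-1 rule: the canonical bi-directed edge produced from a `(k+1)`-mer `z`,
with `x = z[1..k]` and `y = z[2..k+1]`. -/
def CE (k : ℕ) (z : List Base) : BEdge :=
  let x := z.take k
  let y := z.drop 1
  if x = canon x then
    if y = canon y then
      if canon x ≤ canon y then (canon x, canon y, Orient.fwd, Orient.fwd)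
      else (canon y, canon x, Orient.rev, Orient.rev)
    else
      if canon x ≤ canon y then (canon x, canon y, Orient.fwd, Orient.rev)
      else (canon y, canon x, Orient.fwd, Orient.rev)
  else
    if y = canon y then
      if canon x ≤ canon y then (canon x, canon y, Orient.rev, Orient.fwd)
      else (canon y, canon x, Orient.rev, Orient.fwd)
    else
      if canon x ≤ canon y then (canon x, canon y, Orient.rev, Orient.rev)
      else (canon y, canon x, Orient.fwd, Orient.fwd)

/-- The bi-directed reversal of a bi-directed edge: `rev (u, v, o₁, o₂) = (v, u, ¬o₂, ¬o₁)`. -/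
def revEdge (e : BEdge) : BEdge := (e.2.1, e.1, e.2.2.2.neg, e.2.2.1.neg)

/-!
The STEP-1 rule is the composite of two maps. From `z` it forms the raw edge
`(ĥ x, ĥ y, o x, o y)`, where `o s = canonOrient s` is `▷` exactly when `s = ĥ s`, and then
replaces the raw edge by its reversal when its endpoints are out of order. Passing to `rc z`
swaps `x` and `y` up to `rc`; since `ĥ` is invariant under `rc` and, for odd `k`, no `k`-mer is its
own reverse complement (the middle letter would be its own complement), `rc` flips `o`, so the
raw edge of `rc z` is the reversal of the raw edge of `z`. Ordering the endpoints of an edge and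
of its reversal gives the same result unless the two endpoints coincide.
-/

lemma Base.comp_comp (b : Base) : b.comp.comp = b := by cases b <;> rfl

lemma Base.comp_ne_self (b : Base) : b.comp ≠ b := by cases b <;> decide

lemma Orient.neg_neg (o : Orient) : o.neg.neg = o := by cases o <;> rfl

lemma rc_rc (s : List Base) : rc (rc s) = s := by
  simp [rc, List.map_reverse, Function.comp_def, Base.comp_comp]

lemma length_rc (s : List Base) : (rc s).length = s.length := by simp [rc]

lemma take_rc (s : List Base) (n : ℕ) : (rc s).take n = rc (s.drop (s.length - n)) := by
  simp [rc, List.take_reverse, List.map_drop]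

lemma drop_rc (s : List Base) (n : ℕ) : (rc s).drop n = rc (s.take (s.length - n)) := by
  simp [rc, List.drop_reverse, List.map_take]

lemma getElem_rc (s : List Base) (i : ℕ) (hi : i < (rc s).length) :
    (rc s)[i] = (s[s.length - 1 - i]'(by rw [length_rc] at hi; omega)).comp := by
  simp [rc, List.getElem_reverse]

lemma ne_rc_of_odd_length {s : List Base} (hs : Odd s.length) : s ≠ rc s := by
  obtain ⟨m, hm⟩ := hs
  intro h
  have hmid : s[m] = (rc s)[m]'(by rw [length_rc]; omega) := by simp only [← h]
  rw [getElem_rc] at hmid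
  simp only [show s.length - 1 - m = m by omega] at hmid
  exact Base.comp_ne_self _ hmid.symm

lemma canon_eq_or_eq_rc (s : List Base) : canon s = s ∨ canon s = rc s := by
  unfold canon; split_ifs <;> simp

lemma canon_rc (s : List Base) : canon (rc s) = canon s := by
  unfold canon
  rw [rc_rc]
  split_ifs with h₁ h₂ h₂
  · exact le_antisymm h₁ h₂
  · rfl
  · rfl
  · exact absurd (le_of_not_ge h₂) h₁

def canonOrient (s : List Base) : Orient := if s = canon s then .fwd else .rev

lemma canonOrient_rc {s : List Base} (hs : s ≠ rc s) :
    canonOrient (rc s) = (canonOrient s).neg := by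
  have hs' : rc s ≠ s := Ne.symm hs
  unfold canonOrient
  rw [canon_rc]
  rcases canon_eq_or_eq_rc s with h | h <;> simp [h, hs, hs', Orient.neg]

def rawEdge (k : ℕ) (z : List Base) : BEdge :=
  (canon (z.take k), canon (z.drop 1), canonOrient (z.take k), canonOrient (z.drop 1))

def orderEdge (e : BEdge) : BEdge := if e.1 ≤ e.2.1 then e else revEdge e

lemma CE_eq_orderEdge_rawEdge (k : ℕ) (z : List Base) : CE k z = orderEdge (rawEdge k z) := by
  dsimp only [CE, orderEdge, rawEdge, canonOrient, revEdge]
  split_ifs <;> rfl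

lemma rawEdge_rc (k : ℕ) (hk : Odd k) (z : List Base) (hz : z.length = k + 1) :
    rawEdge k (rc z) = revEdge (rawEdge k z) := by
  have hx : z.take k ≠ rc (z.take k) := ne_rc_of_odd_length (by simpa [hz] using hk)
  have hy : z.drop 1 ≠ rc (z.drop 1) := ne_rc_of_odd_length (by simpa [hz] using hk)
  simp only [rawEdge, revEdge, take_rc, drop_rc, hz, canon_rc, canonOrient_rc hx, canonOrient_rc hy,
    Nat.add_sub_cancel, Nat.add_sub_cancel_left]

lemma orderEdge_revEdge (e : BEdge) :
    orderEdge (revEdge e) = orderEdge e ∨ orderEdge (revEdge e) = revEdge (orderEdge e) := by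
  obtain ⟨u, v, o₁, o₂⟩ := e
  unfold orderEdge
  rcases lt_trichotomy u v with h | rfl | h
  · simp [revEdge, Orient.neg_neg, h.le, h.not_ge]
  · simp [revEdge]
  · simp [revEdge, Orient.neg_neg, h.le, h.not_ge]

/-- For odd `k` and any `(k+1)`-mer `z`, the STEP-1 canonical bi-directed
edge produced from `rc z` is, as a bi-directed edge, equal to the one produced from `z`:
it is either `CE k z` itself or its bi-directed reversal. -/
theorem CE_rc_eq_or_revEdge (k : ℕ) (hk : Odd k) (z : List Base) (hz : z.length = k + 1) :
    CE k (rc z) = CE k z ∨ CE k (rc z) = revEdge (CE k z) := by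
  simp only [CE_eq_orderEdge_rawEdge, rawEdge_rc k hk z hz]
  exact orderEdge_revEdge _
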